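/- Let n ≥ 1 and k ≥ 1 be integers, and let S(x) := x^n R(x), where R is a real polynomial of degree at most k. Then for every x ∈ [0, 1 − 10k/n], one has |S(x)| ≤ x^{n/2} · ‖S‖_{[0,1]}. (If 1 − 10k/n < 0 the statement is vacuous.) -/

import Mathlib

/-!
On `[a, 1]` with `a = 1 - (1 - x) / 10` the factor `t ^ n` is at least `a ^ n`, so
`|R| ≤ ‖S‖ / a ^ n` there. The affine map sending `[-1, 1]` onto `[a, 1]` sends `19` to `x`, and
the extremal growth of Chebyshev polynomials, `|P(y)| ≤ T_k(y) ‖P‖_{[-1,1]} ≤ (2y)^k ‖P‖_{[-1,1]}`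
for `y ≥ 1`, gives `|R(x)| ≤ 38^k ‖S‖ / a ^ n`. Finally `38^k x^{n/2} ≤ a ^ n` once
`10 k ≤ n (1 - x)`: compare `38 ≤ e^{19/5}`, `x ≤ e^{-(1-x)}` and `a ≥ e^{-(1-x)/9}`.
-/

open Polynomial Real

namespace Polynomial.Chebyshev

theorem eval_T_real_succ_le {y : ℝ} (hy : 1 ≤ y) (n : ℕ) :
    (T ℝ (n + 1)).eval y ≤ 2 * y * (T ℝ n).eval y := by
  cases n with
  | zero => simp; linarith
  | succ n =>
    have h := one_le_eval_T_real (n : ℤ) hy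
    push_cast
    rw [add_assoc, one_add_one_eq_two, T_add_two]
    simp only [eval_sub, eval_mul, eval_ofNat, eval_X]
    linarith

theorem eval_T_real_le_two_mul_pow {y : ℝ} (hy : 1 ≤ y) (n : ℕ) :
    (T ℝ n).eval y ≤ (2 * y) ^ n := by
  induction n with
  | zero => simp
  | succ n ih =>
    calc (T ℝ (n + 1 : ℕ)).eval y ≤ 2 * y * (T ℝ n).eval y := mod_cast eval_T_real_succ_le hy n
      _ ≤ 2 * y * (2 * y) ^ n := by gcongr
      _ = (2 * y) ^ (n + 1) := by ring

theorem eval_le_eval_T_real_mul {n : ℕ} {P : ℝ[X]} (hP : P.degree ≤ n) {C : ℝ} (hC : 0 < C)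
    (hPC : ∀ x ∈ Set.Icc (-1 : ℝ) 1, |P.eval x| ≤ C) {y : ℝ} (hy : 1 ≤ y) :
    P.eval y ≤ (T ℝ n).eval y * C := by
  have h := eval_iterate_derivative_le_of_forall_abs_le_one (k := 0) hy
    ((degree_C_mul (inv_ne_zero hC.ne')).trans_le hP) fun x hx => by
      rw [eval_mul, eval_C, abs_mul, abs_inv, abs_of_pos hC]
      exact inv_mul_le_one_of_le₀ (hPC x hx) hC.le
  simp only [Function.iterate_zero, id, eval_mul, eval_C] at h
  rwa [inv_mul_le_iff₀ hC, mul_comm] at h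

theorem abs_eval_le_eval_T_real_mul {n : ℕ} {P : ℝ[X]} (hP : P.degree ≤ n) {C : ℝ}
    (hPC : ∀ x ∈ Set.Icc (-1 : ℝ) 1, |P.eval x| ≤ C) {y : ℝ} (hy : 1 ≤ y) :
    |P.eval y| ≤ (T ℝ n).eval y * C := by
  rcases ((abs_nonneg _).trans (hPC 0 (by norm_num))).eq_or_lt with rfl | hC
  · have hP0 : P = 0 :=
      eq_zero_of_infinite_isRoot P <| (Set.Icc_infinite (by norm_num : (-1 : ℝ) < 1)).mono
        fun x hx => by simpa using hPC x hx
    simp [hP0]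
  · refine abs_le.mpr ⟨?_, eval_le_eval_T_real_mul hP hC hPC hy⟩
    have := eval_le_eval_T_real_mul (P := -P) (by rwa [degree_neg]) hC (by simpa using hPC) hy
    rw [eval_neg] at this
    linarith

end Polynomial.Chebyshev

theorem Polynomial.abs_eval_le_of_abs_eval_le_on_Icc {k : ℕ} {P : ℝ[X]} (hP : P.natDegree ≤ k)
    {a b C y : ℝ} (hab : a < b) (hya : y ≤ a) (hC : ∀ t ∈ Set.Icc a b, |P.eval t| ≤ C) :
    |P.eval y| ≤ (2 * ((a + b - 2 * y) / (b - a))) ^ k * C := by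
  set L : ℝ[X] := Polynomial.C ((a + b) / 2) - Polynomial.C ((b - a) / 2) * X
  have hL : ∀ s, L.eval s = (a + b) / 2 - (b - a) / 2 * s := fun s => by simp [L]
  have hLdeg : L.natDegree ≤ 1 :=
    (natDegree_sub_le _ _).trans (max_le (by simp) ((natDegree_C_mul_le _ _).trans (by simp)))
  have hQdeg : (P.comp L).degree ≤ k := degree_le_of_natDegree_le <|
    natDegree_comp_le.trans (by simpa using Nat.mul_le_mul hP hLdeg)
  have hQC : ∀ s ∈ Set.Icc (-1 : ℝ) 1, |(P.comp L).eval s| ≤ C := by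
    intro s ⟨hs₁, hs₂⟩
    rw [eval_comp, hL]
    exact hC _ ⟨by nlinarith, by nlinarith⟩
  have hs : 1 ≤ (a + b - 2 * y) / (b - a) := by
    rw [le_div_iff₀ (by linarith)]; linarith
  have hQy : (P.comp L).eval ((a + b - 2 * y) / (b - a)) = P.eval y := by
    rw [eval_comp, hL]; congr 1; field_simp [(sub_pos.mpr hab).ne']; ring
  have hC0 : 0 ≤ C := (abs_nonneg _).trans (hC a ⟨le_rfl, hab.le⟩)
  calc |P.eval y| ≤ (Chebyshev.T ℝ k).eval ((a + b - 2 * y) / (b - a)) * C := by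
        rw [← hQy]; exact Chebyshev.abs_eval_le_eval_T_real_mul hQdeg hQC hs
    _ ≤ _ := by gcongr; exact Chebyshev.eval_T_real_le_two_mul_pow hs k

theorem abs_le_div_pow_of_abs_pow_mul_le {n : ℕ} {a t r M : ℝ} (ha : 0 < a) (hat : a ≤ t)
    (h : |t ^ n * r| ≤ M) : |r| ≤ M / a ^ n := by
  rw [abs_mul, abs_of_nonneg (pow_nonneg (ha.le.trans hat) n)] at h
  rw [le_div_iff₀ (pow_pos ha n)]
  calc |r| * a ^ n ≤ |r| * t ^ n := by gcongr
    _ ≤ M := by linarith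

theorem abs_eval_le_of_abs_pow_mul_eval_le {n k : ℕ} {R : ℝ[X]} (hR : R.natDegree ≤ k)
    {x M : ℝ} (hx0 : 0 ≤ x) (hx1 : x < 1)
    (hM : ∀ t ∈ Set.Icc (0 : ℝ) 1, |t ^ n * R.eval t| ≤ M) :
    |R.eval x| ≤ 38 ^ k * (M / (1 - (1 - x) / 10) ^ n) := by
  set a := 1 - (1 - x) / 10 with ha_def
  have ha0 : 0 < a := by linarith
  have hRa : ∀ t ∈ Set.Icc a 1, |R.eval t| ≤ M / a ^ n := fun t ⟨ht₁, ht₂⟩ =>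
    abs_le_div_pow_of_abs_pow_mul_le ha0 ht₁ (hM t ⟨by linarith, ht₂⟩)
  have h19 : (a + 1 - 2 * x) / (1 - a) = 19 := by rw [div_eq_iff (by linarith)]; linarith
  have := abs_eval_le_of_abs_eval_le_on_Icc (y := x) hR (show a < 1 by linarith) (by linarith) hRa
  rwa [h19, show (2 : ℝ) * 19 = 38 by norm_num] at this

theorem thirtyEight_pow_mul_rpow_half_le {n k : ℕ} {x : ℝ} (hx0 : 0 ≤ x) (hx1 : x ≤ 1)
    (hkn : 10 * k ≤ n * (1 - x)) :
    (38 : ℝ) ^ k * x ^ ((n : ℝ) / 2) ≤ (1 - (1 - x) / 10) ^ n := by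
  set δ := 1 - x with hδ
  have h38 : (38 : ℝ) ≤ exp (19 / 5) := by
    calc (38 : ℝ) ≤ (1 / 20 + 1) ^ 76 := by norm_num
      _ ≤ exp (1 / 20) ^ 76 := by gcongr; exact add_one_le_exp _
      _ = exp (19 / 5) := by rw [← exp_nat_mul]; norm_num
  have hx : x ^ ((n : ℝ) / 2) ≤ exp (-δ) ^ ((n : ℝ) / 2) :=
    rpow_le_rpow hx0 (by linarith [add_one_le_exp (-δ)]) (by positivity)
  have ha : exp (-δ / 9) ≤ 1 - δ / 10 := by
    have hlog := one_sub_inv_le_log_of_pos (x := 1 - δ / 10) (by linarith)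
    have hinv : (1 - δ / 10)⁻¹ ≤ 1 + δ / 9 := by
      rw [inv_le_iff_one_le_mul₀ (by linarith)]; nlinarith
    calc exp (-δ / 9) ≤ exp (log (1 - δ / 10)) := exp_le_exp.mpr (by linarith)
      _ = 1 - δ / 10 := exp_log (by linarith)
  calc (38 : ℝ) ^ k * x ^ ((n : ℝ) / 2) ≤ exp (19 / 5) ^ k * exp (-δ) ^ ((n : ℝ) / 2) := by
        gcongr
    _ = exp (19 / 5 * k - δ * n / 2) := by
        rw [← exp_mul, ← exp_nat_mul, ← exp_add]; congr 1; ring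
    _ ≤ exp (n * (-δ / 9)) := exp_le_exp.mpr (by nlinarith)
    _ = exp (-δ / 9) ^ n := exp_nat_mul _ _
    _ ≤ (1 - δ / 10) ^ n := by gcongr

/-- Let `n ≥ 1` and `k ≥ 1` be integers, and let `S(x) := x^n R(x)` with `R` a real
polynomial of degree at most `k`. Then for every `x ∈ [0, 1 - 10k/n]`,
`|S(x)| ≤ x^(n/2) ‖S‖_{[0,1]}`. -/
theorem stmt_7 (n k : ℕ) (hn : 1 ≤ n) (hk : 1 ≤ k) (R : Polynomial ℝ)
    (hR : R.natDegree ≤ k) (x : ℝ)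
    (hx : x ∈ Set.Icc (0:ℝ) (1 - 10 * (k : ℝ) / (n : ℝ))) :
    |x ^ n * R.eval x| ≤ x ^ ((n : ℝ) / 2) *
      ⨆ t : Set.Icc (0:ℝ) 1, |(t : ℝ) ^ n * R.eval (t : ℝ)| := by
  obtain ⟨hx0, hxk⟩ := hx
  set M := ⨆ t : Set.Icc (0:ℝ) 1, |(t : ℝ) ^ n * R.eval (t : ℝ)|
  have hM : ∀ t ∈ Set.Icc (0 : ℝ) 1, |t ^ n * R.eval t| ≤ M := fun t ht =>
    le_ciSup (f := fun s : Set.Icc (0 : ℝ) 1 => |(s : ℝ) ^ n * R.eval (s : ℝ)|)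
      (isCompact_range (by fun_prop)).bddAbove ⟨t, ht⟩
  have hM0 : 0 ≤ M := (abs_nonneg _).trans (hM 0 ⟨le_rfl, zero_le_one⟩)
  have hn0 : (0 : ℝ) < n := by exact_mod_cast hn
  have hkn : 10 * k ≤ n * (1 - x) := by
    rw [le_sub_iff_add_le, ← le_sub_iff_add_le', div_le_iff₀ hn0] at hxk; linarith
  have hx1 : x < 1 := by
    have : (1 : ℝ) ≤ k := by exact_mod_cast hk
    nlinarith
  have ha0 : 0 < 1 - (1 - x) / 10 := by linarith
  set a := 1 - (1 - x) / 10
  have hRx : |R.eval x| ≤ 38 ^ k * (M / a ^ n) := abs_eval_le_of_abs_pow_mul_eval_le hR hx0 hx1 hM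
  have hsplit : x ^ n = x ^ ((n : ℝ) / 2) * x ^ ((n : ℝ) / 2) := by
    rw [← rpow_add' hx0 (by positivity), add_halves, rpow_natCast]
  calc |x ^ n * R.eval x| = x ^ ((n : ℝ) / 2) * (x ^ ((n : ℝ) / 2) * |R.eval x|) := by
        rw [abs_mul, abs_of_nonneg (by positivity), hsplit, mul_assoc]
    _ ≤ x ^ ((n : ℝ) / 2) * (x ^ ((n : ℝ) / 2) * (38 ^ k * (M / a ^ n))) := by gcongr
    _ = x ^ ((n : ℝ) / 2) * (38 ^ k * x ^ ((n : ℝ) / 2) * (M / a ^ n)) := by ring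
    _ ≤ x ^ ((n : ℝ) / 2) * (a ^ n * (M / a ^ n)) := by
        gcongr
        exact thirtyEight_pow_mul_rpow_half_le hx0 hx1.le hkn
    _ = x ^ ((n : ℝ) / 2) * M := by rw [mul_div_cancel₀ _ (pow_pos ha0 n).ne']
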